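/- arXiv:2507.12781 — 7 statements merged into one kernel-verified Lean document; each statement's English description precedes it below -/
import Mathlib

section
/- Let A ⊆ B ⊆ C be ℕ-graded rings such that C₀ is a finitely generated A₀-module, A is generated over A₀ by its degree-one component A₁, and both A and C are Noetherian. Then B is a finitely generated A-module if and only if there exists k ≥ 0 such that for all n ≥ k, the degree-n component Bₙ is contained in A_{n-k}·C_k (the A₀-submodule of Cₙ generated by products of elements of A_{n-k} and C_k). -/
/-!
If `B = ∑ A sᵢ` and every `sᵢ` has components only in degrees `≤ k`, the degree-`n` component of
`∑ aᵢ sᵢ` is a sum of terms `(aᵢ)_{n-j} (sᵢ)_j` with `j ≤ k`; as `A` is generated in degree one,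
`A_{n-j} ⊆ A_{n-k} · A_{k-j}`, and `A_{k-j} · C_j ⊆ C_k`.

Conversely, the ideal generated by `Cₙ` in the Noetherian ring `C` is generated by finitely many
elements of `Cₙ`, so `Cₙ` is a finite `C₀`-module, hence lies in the `A`-span of a finite set.
The hypothesis puts `B` inside the `A`-span of `C₀ + ⋯ + C_k`, a finite module over the
Noetherian ring `A`, so `B` is finitely generated.
-/

open DirectSum Pointwise

theorem AddSubmonoid.mul_left_mem_mul {R : Type*} [CommSemiring R] {M N : AddSubmonoid R}
    {z x : R} (hN : ∀ n ∈ N, z * n ∈ N) (hx : x ∈ M * N) : z * x ∈ M * N := by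
  refine AddSubmonoid.mul_induction_on hx (fun m hm n hn => ?_) (fun x y hx hy => ?_)
  · rw [mul_left_comm]
    exact mul_mem_mul hm (hN n hn)
  · rw [mul_add]
    exact add_mem hx hy

theorem Subring.mem_span_finset_iff {R : Type*} [Ring R] {A : Subring R} {s : Finset R} {c : R} :
    c ∈ Submodule.span A (s : Set R) ↔ ∃ a : R → R, (∀ x ∈ s, a x ∈ A) ∧ c = ∑ x ∈ s, a x * x := by
  constructor
  · intro hc
    obtain ⟨f, -, rfl⟩ := Submodule.mem_span_finset.mp hc
    exact ⟨fun x => f x, fun x _ => (f x).2, rfl⟩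
  · rintro ⟨a, ha, rfl⟩
    exact sum_mem fun x hx => Submodule.smul_mem _ (⟨a x, ha x hx⟩ : A) (Submodule.subset_span hx)

namespace Subring

variable {C : Type*} [CommRing C] (𝒞 : ℕ → AddSubgroup C) (A : Subring C)

def gradedPart (n : ℕ) : AddSubmonoid C := A.toAddSubmonoid ⊓ (𝒞 n).toAddSubmonoid

def IsGeneratedInDegreeOne : Prop :=
  A ≤ Subring.closure (((A : Set C) ∩ (𝒞 0 : Set C)) ∪ ((A : Set C) ∩ (𝒞 1 : Set C)))

variable {𝒞 A}

theorem mem_gradedPart {n : ℕ} {x : C} : x ∈ A.gradedPart 𝒞 n ↔ x ∈ A ∧ x ∈ 𝒞 n := Iff.rfl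

theorem gradedPart_mul_grade_le_closure (i k : ℕ) :
    A.gradedPart 𝒞 i * (𝒞 k).toAddSubmonoid ≤ (AddSubgroup.closure
      {y | ∃ a c, a ∈ A ∧ a ∈ 𝒞 i ∧ c ∈ 𝒞 k ∧ y = a * c}).toAddSubmonoid :=
  AddSubmonoid.mul_le.mpr fun a ha c hc => AddSubgroup.subset_closure ⟨a, c, ha.1, ha.2, hc, rfl⟩

variable (𝒞 A) [GradedRing 𝒞]

def IsHomogeneous : Prop := ∀ x ∈ A, ∀ n, (decompose 𝒞 x n : C) ∈ A

variable {𝒞 A}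

theorem gradedPart_mul_le (i j : ℕ) :
    A.gradedPart 𝒞 i * A.gradedPart 𝒞 j ≤ A.gradedPart 𝒞 (i + j) :=
  AddSubmonoid.mul_le.mpr fun _ ha _ hb =>
    ⟨A.mul_mem ha.1 hb.1, SetLike.mul_mem_graded (A := 𝒞) ha.2 hb.2⟩

theorem gradedPart_mul_grade_le (i j : ℕ) :
    A.gradedPart 𝒞 i * (𝒞 j).toAddSubmonoid ≤ (𝒞 (i + j)).toAddSubmonoid :=
  AddSubmonoid.mul_le.mpr fun _ ha _ hc => SetLike.mul_mem_graded (A := 𝒞) ha.2 hc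

theorem gradedPart_succ_le_mul (hA : A.IsHomogeneous 𝒞) (hA₁ : A.IsGeneratedInDegreeOne 𝒞)
    (m : ℕ) : A.gradedPart 𝒞 (m + 1) ≤ A.gradedPart 𝒞 1 * A.gradedPart 𝒞 m := by
  set S : Set C := ((A : Set C) ∩ (𝒞 0 : Set C)) ∪ ((A : Set C) ∩ (𝒞 1 : Set C))
  set P := A.gradedPart 𝒞 1 * A.gradedPart 𝒞 m
  have hSA : Submonoid.closure S ≤ A.toSubmonoid :=
    Submonoid.closure_le.mpr fun z hz => hz.elim (·.1) (·.1)
  have hmonomial : ∀ y ∈ Submonoid.closure S, (decompose 𝒞 y (m + 1) : C) ∈ P := by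
    intro y hy
    induction hy using Submonoid.closure_induction_left with
    | one =>
      rw [decompose_of_mem_ne 𝒞 (SetLike.one_mem_graded 𝒞) (by omega)]
      exact zero_mem P
    | mul_left z hz y hy ih =>
      rcases hz with ⟨hzA, hz0⟩ | ⟨hzA, hz1⟩
      · rw [coe_decompose_mul_of_left_mem_zero 𝒞 hz0]
        refine AddSubmonoid.mul_left_mem_mul (fun q hq => ⟨A.mul_mem hzA hq.1, ?_⟩) ih
        simpa using SetLike.mul_mem_graded hz0 hq.2
      · rw [coe_decompose_mul_of_left_mem_of_le 𝒞 hz1 (by omega), Nat.add_sub_cancel]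
        exact AddSubmonoid.mul_mem_mul ⟨hzA, hz1⟩ ⟨hA _ (hSA hy) _, SetLike.coe_mem _⟩
  have hpolynomial : ∀ x ∈ AddSubgroup.closure (Submonoid.closure S : Set C),
      (decompose 𝒞 x (m + 1) : C) ∈ P := by
    intro x hx
    induction hx using AddSubgroup.closure_induction with
    | mem y hy => exact hmonomial y hy
    | zero => simp
    | add x y _ _ hx hy => simpa using add_mem hx hy
    | neg x _ hx =>
      rw [← GradedRing.proj_apply, map_neg, GradedRing.proj_apply, ← neg_one_mul]
      refine AddSubmonoid.mul_left_mem_mul (fun q hq => ?_) hx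
      rw [neg_one_mul]
      exact ⟨A.neg_mem hq.1, (𝒞 m).neg_mem hq.2⟩
  rintro a ⟨haA, ha⟩
  rw [← decompose_of_mem_same 𝒞 ha]
  exact hpolynomial a (Subring.mem_closure_iff.mp (hA₁ haA))

theorem gradedPart_add_le_mul (hA : A.IsHomogeneous 𝒞) (hA₁ : A.IsGeneratedInDegreeOne 𝒞)
    (d m : ℕ) : A.gradedPart 𝒞 (d + m) ≤ A.gradedPart 𝒞 d * A.gradedPart 𝒞 m := by
  induction d with
  | zero =>
    intro a ha
    rw [zero_add] at ha
    simpa using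
      AddSubmonoid.mul_mem_mul (mem_gradedPart.mpr ⟨A.one_mem, SetLike.one_mem_graded 𝒞⟩) ha
  | succ d ih =>
    calc A.gradedPart 𝒞 (d + 1 + m) = A.gradedPart 𝒞 (d + m + 1) := by rw [Nat.add_right_comm]
      _ ≤ A.gradedPart 𝒞 1 * A.gradedPart 𝒞 (d + m) := gradedPart_succ_le_mul hA hA₁ _
      _ ≤ A.gradedPart 𝒞 1 * (A.gradedPart 𝒞 d * A.gradedPart 𝒞 m) :=
        AddSubmonoid.mul_le_mul_right ih
      _ = A.gradedPart 𝒞 1 * A.gradedPart 𝒞 d * A.gradedPart 𝒞 m := (mul_assoc ..).symm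
      _ ≤ A.gradedPart 𝒞 (1 + d) * A.gradedPart 𝒞 m :=
        AddSubmonoid.mul_le_mul_left (gradedPart_mul_le 1 d)
      _ = A.gradedPart 𝒞 (d + 1) * A.gradedPart 𝒞 m := by rw [add_comm]

theorem gradedPart_mul_grade_le_of_le (hA : A.IsHomogeneous 𝒞)
    (hA₁ : A.IsGeneratedInDegreeOne 𝒞) {j k n : ℕ} (hjk : j ≤ k) (hkn : k ≤ n) :
    A.gradedPart 𝒞 (n - j) * (𝒞 j).toAddSubmonoid ≤
      A.gradedPart 𝒞 (n - k) * (𝒞 k).toAddSubmonoid :=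
  calc A.gradedPart 𝒞 (n - j) * (𝒞 j).toAddSubmonoid
      = A.gradedPart 𝒞 (n - k + (k - j)) * (𝒞 j).toAddSubmonoid := by
        rw [Nat.sub_add_sub_cancel hkn hjk]
    _ ≤ A.gradedPart 𝒞 (n - k) * A.gradedPart 𝒞 (k - j) * (𝒞 j).toAddSubmonoid :=
      AddSubmonoid.mul_le_mul_left (gradedPart_add_le_mul hA hA₁ _ _)
    _ = A.gradedPart 𝒞 (n - k) * (A.gradedPart 𝒞 (k - j) * (𝒞 j).toAddSubmonoid) := mul_assoc ..
    _ ≤ A.gradedPart 𝒞 (n - k) * (𝒞 (k - j + j)).toAddSubmonoid :=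
      AddSubmonoid.mul_le_mul_right (gradedPart_mul_grade_le _ _)
    _ = A.gradedPart 𝒞 (n - k) * (𝒞 k).toAddSubmonoid := by rw [Nat.sub_add_cancel hjk]

theorem decompose_mul_mem_gradedPart_mul (hA : A.IsHomogeneous 𝒞)
    (hA₁ : A.IsGeneratedInDegreeOne 𝒞) {k n : ℕ} (hkn : k ≤ n) {a x : C} (ha : a ∈ A)
    (hx : ∀ j, k < j → decompose 𝒞 x j = 0) :
    (decompose 𝒞 (a * x) n : C) ∈ A.gradedPart 𝒞 (n - k) * (𝒞 k).toAddSubmonoid := by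
  classical
  rw [← sum_support_decompose 𝒞 x, Finset.mul_sum, ← GradedRing.proj_apply, map_sum]
  refine sum_mem fun j hj => ?_
  have hjk : j ≤ k := not_lt.mp fun hkj => DFinsupp.mem_support_iff.mp hj (hx j hkj)
  rw [GradedRing.proj_apply,
    coe_decompose_mul_of_right_mem_of_le 𝒞 (SetLike.coe_mem _) (hjk.trans hkn)]
  exact gradedPart_mul_grade_le_of_le hA hA₁ hjk hkn
    (AddSubmonoid.mul_mem_mul ⟨hA a ha _, SetLike.coe_mem _⟩ (SetLike.coe_mem _))

theorem exists_decompose_mem_gradedPart_mul_of_mem_span (hA : A.IsHomogeneous 𝒞)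
    (hA₁ : A.IsGeneratedInDegreeOne 𝒞) (s : Finset C) :
    ∃ k, ∀ b ∈ Submodule.span A (s : Set C), ∀ n ≥ k,
      (decompose 𝒞 b n : C) ∈ A.gradedPart 𝒞 (n - k) * (𝒞 k).toAddSubmonoid := by
  classical
  refine ⟨s.sup fun x => (decompose 𝒞 x).support.sup id, fun b hb n hn => ?_⟩
  obtain ⟨f, -, rfl⟩ := Submodule.mem_span_finset.mp hb
  rw [← GradedRing.proj_apply, map_sum]
  refine sum_mem fun x hx => ?_
  rw [GradedRing.proj_apply, Subring.smul_def, smul_eq_mul]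
  exact decompose_mul_mem_gradedPart_mul hA hA₁ hn (f x).2
    fun j hkj => by_contra fun hj => hkj.not_ge <|
      (Finset.le_sup (f := id) (DFinsupp.mem_support_iff.mpr hj)).trans
        (Finset.le_sup (f := fun x => (decompose 𝒞 x).support.sup id) hx)

theorem exists_finset_grade_subset_span [IsNoetherianRing C] (R : Subring C) {s₀ : Finset C}
    (hs₀ : (𝒞 0 : Set C) ⊆ Submodule.span R (s₀ : Set C)) (n : ℕ) :
    ∃ u : Finset C, (𝒞 n : Set C) ⊆ Submodule.span R (u : Set C) := by
  classical
  obtain ⟨t, htn, hspan⟩ := (Submodule.fg_span_iff_fg_span_finset_subset (𝒞 n : Set C)).mp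
    (IsNoetherian.noetherian (Submodule.span C (𝒞 n : Set C)))
  refine ⟨s₀ * t, fun x hx => ?_⟩
  obtain ⟨g, -, hg⟩ := Submodule.mem_span_finset.mp (hspan ▸ Submodule.subset_span hx)
  have hx_eq : x = ∑ e ∈ t, (decompose 𝒞 (g e) 0 : C) * e := by
    rw [← decompose_of_mem_same 𝒞 hx, ← hg, ← GradedRing.proj_apply, map_sum]
    refine Finset.sum_congr rfl fun e he => ?_
    rw [GradedRing.proj_apply, smul_eq_mul,
      coe_decompose_mul_of_right_mem_of_le 𝒞 (htn he) le_rfl, Nat.sub_self]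
  rw [hx_eq, Finset.coe_mul, ← Submodule.span_mul_span]
  exact sum_mem fun e he =>
    Submodule.mul_mem_mul (hs₀ (SetLike.coe_mem _)) (Submodule.subset_span he)

theorem subset_span_iUnion_of_forall_ge {B : Subring C} (hB : B.IsHomogeneous 𝒞) {k : ℕ}
    (hk : ∀ n ≥ k, ∀ b ∈ B, b ∈ 𝒞 n →
      b ∈ AddSubgroup.closure {y | ∃ a c, a ∈ A ∧ a ∈ 𝒞 (n - k) ∧ c ∈ 𝒞 k ∧ y = a * c})
    {u : ℕ → Set C} (hu : ∀ n, (𝒞 n : Set C) ⊆ Submodule.span A (u n)) :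
    (B : Set C) ⊆ Submodule.span A (⋃ n ≤ k, u n) := by
  classical
  set N := Submodule.span A (⋃ n ≤ k, u n)
  have hlow : ∀ n ≤ k, (𝒞 n : Set C) ⊆ N := fun n hn =>
    (hu n).trans (Submodule.span_mono (Set.subset_biUnion_of_mem (u := u) hn))
  have hhigh : ∀ n, AddSubgroup.closure {y | ∃ a c, a ∈ A ∧ a ∈ 𝒞 (n - k) ∧ c ∈ 𝒞 k ∧ y = a * c}
      ≤ N.toAddSubgroup := fun n => (AddSubgroup.closure_le _).mpr <| by
    rintro _ ⟨a, c, ha, -, hc, rfl⟩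
    exact N.smul_mem (⟨a, ha⟩ : A) (hlow k le_rfl hc)
  intro b hb
  rw [← sum_support_decompose 𝒞 b]
  refine sum_mem fun n _ => ?_
  rcases le_total n k with hnk | hkn
  · exact hlow n hnk (SetLike.coe_mem _)
  · exact hhigh n (hk n hkn _ (hB b hb n) (SetLike.coe_mem _))

end Subring

theorem graded_fg_criterion_general {C : Type} [CommRing C] (𝒞 : ℕ → AddSubgroup C) [GradedRing 𝒞]
    (A B : Subring C)
    (hAgr : ∀ x ∈ A, ∀ n, (DirectSum.decompose 𝒞 x n : C) ∈ A)
    (hBgr : ∀ x ∈ B, ∀ n, (DirectSum.decompose 𝒞 x n : C) ∈ B)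
    (hC0 : ∃ s : Finset C, (↑s : Set C) ⊆ (𝒞 0 : Set C) ∧ ∀ c ∈ 𝒞 0,
      ∃ a : C → C, (∀ x ∈ s, a x ∈ A ∧ a x ∈ 𝒞 0) ∧ c = ∑ x ∈ s, a x * x)
    (hA1 : A ≤ Subring.closure (((A : Set C) ∩ (𝒞 0 : Set C)) ∪ ((A : Set C) ∩ (𝒞 1 : Set C))))
    (hAnoeth : IsNoetherianRing A) (hCnoeth : IsNoetherianRing C) :
    (∃ s : Finset C, (↑s : Set C) ⊆ (B : Set C) ∧ ∀ b ∈ B,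
        ∃ a : C → C, (∀ x ∈ s, a x ∈ A) ∧ b = ∑ x ∈ s, a x * x)
      ↔ ∃ k : ℕ, ∀ n ≥ k, ∀ b ∈ B, b ∈ 𝒞 n →
        b ∈ AddSubgroup.closure {y | ∃ a c, a ∈ A ∧ a ∈ 𝒞 (n - k) ∧ c ∈ 𝒞 k ∧ y = a * c} := by
  constructor
  · rintro ⟨s, -, hs⟩
    obtain ⟨k, hk⟩ := Subring.exists_decompose_mem_gradedPart_mul_of_mem_span hAgr hA1 s
    refine ⟨k, fun n hn b hb hbn => ?_⟩
    have hbk := hk b (Subring.mem_span_finset_iff.mpr (hs b hb)) n hn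
    rw [decompose_of_mem_same 𝒞 hbn] at hbk
    exact Subring.gradedPart_mul_grade_le_closure (n - k) k hbk
  · rintro ⟨k, hk⟩
    obtain ⟨s₀, -, hs₀⟩ := hC0
    choose u hu using Subring.exists_finset_grade_subset_span A (s₀ := s₀) (fun c hc => by
      obtain ⟨a, ha, rfl⟩ := hs₀ c hc
      exact Subring.mem_span_finset_iff.mpr ⟨a, fun x hx => (ha x hx).1, rfl⟩)
    obtain ⟨s, hsB, hspan⟩ := (Submodule.fg_span_iff_fg_span_finset_subset (B : Set C)).mp
      ((Submodule.fg_span ((Set.finite_le_nat k).biUnion fun n _ => (u n).finite_toSet)).of_le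
        (Submodule.span_le.mpr (Subring.subset_span_iUnion_of_forall_ge hBgr hk hu)))
    exact ⟨s, hsB, fun b hb => Subring.mem_span_finset_iff.mp (hspan ▸ Submodule.subset_span hb)⟩

/-- Lemma (graded finiteness criterion). Let `A ⊆ B ⊆ C` be ℕ-graded rings (realised as
subrings `A ≤ B` of a ring `C` graded by `𝒞`, with `A` and `B` graded subrings). Suppose
`C₀` is a finitely generated `A₀`-module, `A = A₀[A₁]`, and `A` and `C` are Noetherian.
Then `B` is a finitely generated `A`-module iff there is `k ≥ 0` such that for all `n ≥ k`,
`Bₙ ⊆ A_{n-k}·C_k` (the additive group generated by products, which is the `A₀`-submodule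
generated by products since `A₀·A_{n-k} ⊆ A_{n-k}`). -/
theorem graded_fg_criterion {C : Type} [CommRing C] (𝒞 : ℕ → AddSubgroup C) [GradedRing 𝒞]
    (A B : Subring C) (hAB : A ≤ B)
    (hAgr : ∀ x ∈ A, ∀ n, (DirectSum.decompose 𝒞 x n : C) ∈ A)
    (hBgr : ∀ x ∈ B, ∀ n, (DirectSum.decompose 𝒞 x n : C) ∈ B)
    (hC0 : ∃ s : Finset C, (↑s : Set C) ⊆ (𝒞 0 : Set C) ∧ ∀ c ∈ 𝒞 0,
      ∃ a : C → C, (∀ x ∈ s, a x ∈ A ∧ a x ∈ 𝒞 0) ∧ c = ∑ x ∈ s, a x * x)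
    (hA1 : A ≤ Subring.closure (((A : Set C) ∩ (𝒞 0 : Set C)) ∪ ((A : Set C) ∩ (𝒞 1 : Set C))))
    (hAnoeth : IsNoetherianRing A) (hCnoeth : IsNoetherianRing C) :
    (∃ s : Finset C, (↑s : Set C) ⊆ (B : Set C) ∧ ∀ b ∈ B,
        ∃ a : C → C, (∀ x ∈ s, a x ∈ A) ∧ b = ∑ x ∈ s, a x * x)
      ↔ ∃ k : ℕ, ∀ n ≥ k, ∀ b ∈ B, b ∈ 𝒞 n →
        b ∈ AddSubgroup.closure {y | ∃ a c, a ∈ A ∧ a ∈ 𝒞 (n - k) ∧ c ∈ 𝒞 k ∧ y = a * c} :=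
  graded_fg_criterion_general 𝒞 A B hAgr hBgr hC0 hA1 hAnoeth hCnoeth
end

section
/- Let (R, 𝔪) be a Noetherian local ring and I an 𝔪-primary ideal such that the integral closure of Iⁿ satisfies \overline{Iⁿ} ⊆ I^{m(n)}, where m(n) → ∞ as n → ∞. Then R is analytically unramified, i.e., the 𝔪-adic completion of R is reduced. -/
set_option maxHeartbeats 1000000
set_option synthInstance.maxHeartbeats 400000
open MvPolynomial IsLocalRing

/-- The linear form in `MvPolynomial (Fin r) R` corresponding to a vector `v : Fin r → R`,
i.e. `∑ i, v i • Tᵢ`. -/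
noncomputable def linForm {R : Type} [CommRing R] {r : ℕ} (v : Fin r → R) :
    MvPolynomial (Fin r) R := ∑ i, C (v i) * X i

/-- The Rees algebra `S(M)` of a submodule `M ⊆ F = Rʳ`: the image of the symmetric algebra
of `M` inside the symmetric algebra `S(F) = R[T₁,…,T_r]`, i.e. the `R`-subalgebra generated
by the linear forms coming from `M`. -/
noncomputable def ReesAlg {R : Type} [CommRing R] {r : ℕ} (M : Submodule R (Fin r → R)) :
    Subalgebra R (MvPolynomial (Fin r) R) :=
  Algebra.adjoin R (linForm '' (M : Set (Fin r → R)))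

/-- The degree-`n` graded component `Sₙ(M)` of the Rees algebra `S(M) ⊆ S(F)`. -/
noncomputable def SnM {R : Type} [CommRing R] {r : ℕ} (M : Submodule R (Fin r → R)) (n : ℕ) :
    Submodule R (MvPolynomial (Fin r) R) :=
  (ReesAlg M).toSubmodule ⊓ homogeneousSubmodule (Fin r) R n

/-- `x` lies in the integral closure of the ideal `I`: it satisfies an equation
`x^p + a₁ x^(p-1) + ⋯ + a_p = 0` with `aᵢ ∈ Iⁱ`. -/
def MemIntClosure {R : Type} [CommRing R] (I : Ideal R) (x : R) : Prop :=
  ∃ (p : ℕ) (a : ℕ → R), 0 < p ∧ (∀ i < p, a i ∈ I ^ (p - i)) ∧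
    x ^ p + ∑ i ∈ Finset.range p, a i * x ^ i = 0

/-!
Let `f` be an element of the `𝔪`-adic completion with `f ^ k = 0`, and fix a level `t`. Choose
`n` with `m n ≥ t` and `c` with `𝔪 ^ c ⊆ I`. A lift `x ∈ R` of `f` modulo `𝔪 ^ (c * n * k)`
satisfies `x ^ k ∈ 𝔪 ^ (c * n * k) ⊆ (I ^ n) ^ k`, so `x` is integral over `I ^ n`; hence
`x ∈ I ^ (m n) ⊆ 𝔪 ^ t`, i.e. `f` vanishes modulo `𝔪 ^ t`.
-/

namespace AdicCompletion

variable {R : Type*} [CommRing R] {J : Ideal R}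

theorem factor_evalₐ {t N : ℕ} (h : t ≤ N) (f : AdicCompletion J R) :
    Ideal.Quotient.factor (Ideal.pow_le_pow_right h) (evalₐ J N f) = evalₐ J t f := by
  obtain ⟨a, rfl⟩ := mk_surjective J R f
  simp only [evalₐ_mk, Ideal.Quotient.factor_mk]
  exact Ideal.mk_eq_mk J h a

theorem isReduced_of_forall_pow_mem
    (H : ∀ k t : ℕ, 0 < k → ∃ N, ∀ x : R, x ^ k ∈ J ^ N → x ∈ J ^ t) :
    IsReduced (AdicCompletion J R) := by
  refine ⟨fun f ⟨k, hk⟩ => ext_evalₐ fun t => ?_⟩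
  have hk1 : f ^ (k + 1) = 0 := by rw [pow_succ, hk, zero_mul]
  obtain ⟨N, hN⟩ := H (k + 1) t k.succ_pos
  obtain ⟨x, hx⟩ := Ideal.Quotient.mk_surjective (evalₐ J (max N t) f)
  have hxk : x ^ (k + 1) ∈ J ^ (max N t) := by
    rw [← Ideal.Quotient.eq_zero_iff_mem, map_pow, hx, ← map_pow, hk1, _root_.map_zero]
  have hxt : x ∈ J ^ t := hN x (Ideal.pow_le_pow_right (le_max_left N t) hxk)
  rwa [_root_.map_zero, ← factor_evalₐ (le_max_right N t), ← hx, Ideal.Quotient.factor_mk,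
    Ideal.Quotient.eq_zero_iff_mem]

end AdicCompletion

theorem memIntClosure_of_pow_mem_pow {R : Type} [CommRing R] {I : Ideal R} {x : R} {k : ℕ}
    (hk : 0 < k) (hx : x ^ k ∈ I ^ k) : MemIntClosure I x := by
  refine ⟨k, Pi.single 0 (-x ^ k), hk, fun i hi => ?_, ?_⟩
  · rcases eq_or_ne i 0 with rfl | hi0
    · simpa using hx
    · simp [hi0]
  · rw [Finset.sum_eq_single_of_mem 0 (Finset.mem_range.mpr hk) fun i _ hi => by simp [hi]]
    simp

/-- Rees's lemma: if `I` is an `𝔪`-primary ideal of a Noetherian local ring `(R, 𝔪)` with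
`\overline{Iⁿ} ⊆ I^{m(n)}` where `m(n) → ∞`, then `R` is analytically unramified, i.e. the
`𝔪`-adic completion of `R` is reduced. -/
theorem rees_lemma {R : Type} [CommRing R] [IsNoetherianRing R] [IsLocalRing R]
    (I : Ideal R) (hprim : I.radical = maximalIdeal R)
    (m : ℕ → ℕ) (hm : Filter.Tendsto m Filter.atTop Filter.atTop)
    (h : ∀ (n : ℕ) (x : R), MemIntClosure (I ^ n) x → x ∈ I ^ (m n)) :
    IsReduced (AdicCompletion (maximalIdeal R) R) := by
  have hI : I ≤ maximalIdeal R := hprim ▸ Ideal.le_radical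
  obtain ⟨c, hc⟩ := Ideal.exists_radical_pow_le_of_fg I (IsNoetherian.noetherian I.radical)
  rw [hprim] at hc
  refine AdicCompletion.isReduced_of_forall_pow_mem fun k t hk => ?_
  obtain ⟨n, hn⟩ := (hm.eventually_ge_atTop t).exists
  refine ⟨c * (n * k), fun x hx => ?_⟩
  have hxk : x ^ k ∈ (I ^ n) ^ k := by
    rw [← pow_mul]
    exact Ideal.pow_right_mono hc _ (by rwa [← pow_mul])
  exact Ideal.pow_le_pow_right hn
    (Ideal.pow_right_mono hI _ (h n x (memIntClosure_of_pow_mem_pow hk hxk)))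
end

section
/- Let R be a Noetherian ring and M ⊆ F with F finitely generated free. For each n ≥ 1, let I(Sₙ(M)) be the ideal of maximal minors of a presentation matrix of the image Sₙ(M) of the n-th symmetric power of M inside Sₙ(F). Then \overline{I(Sₙ(M))}·Sₙ(F) ⊆ Vₙ, where V is the integral closure of the Rees algebra S(M) inside S(F) and Vₙ is its degree-n component. -/
/-! By Cramer's rule a maximal minor `d` of `Sₙ(M) ⊆ Sₙ(F)` satisfies `d • Sₙ(F) ⊆ Sₙ(M)`, hence
`a pᵏ ∈ S(M)` for `p ∈ Sₙ(F)` and `a ∈ Iᵏ`. Multiplying an equation `xᵐ + a₁xᵐ⁻¹ + ⋯ + aₘ = 0`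
with `aᵢ ∈ Iⁱ` by `pᵐ` gives `(xp)ᵐ + (a₁p)(xp)ᵐ⁻¹ + ⋯ + aₘpᵐ = 0`, an integral equation for `xp`
over `S(M)`. -/
set_option maxHeartbeats 1000000
set_option synthInstance.maxHeartbeats 400000
open MvPolynomial IsLocalRing

/-- The ideal of maximal minors of a submodule `N` of a free module `F` with finite basis
`b`: the ideal generated by determinants of square matrices whose columns are coordinate
vectors (w.r.t. `b`) of elements of `N`. -/
noncomputable def minorsIdeal {R F : Type} [CommRing R] [AddCommGroup F] [Module R F]
    {κ : Type} [Fintype κ] [DecidableEq κ] (b : Module.Basis κ R F) (N : Submodule R F) : Ideal R :=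
  Ideal.span {x | ∃ v : κ → F, (∀ j, v j ∈ N) ∧
    x = Matrix.det (Matrix.of fun i j => b.repr (v j) i)}


theorem Module.Basis.det_smul_mem_span {R F ι : Type*} [CommRing R] [AddCommGroup F] [Module R F]
    [Fintype ι] [DecidableEq ι] (b : Module.Basis ι R F) (v : ι → F) (q : F) :
    b.det v • q ∈ Submodule.span R (Set.range v) := by
  have hq : b.det v • q = ∑ j, (b.toMatrix v).cramer (b.equivFun q) j • v j := by
    apply b.equivFun.injective
    ext i
    simpa [Matrix.mulVec, dotProduct, Module.Basis.toMatrix_apply, Module.Basis.det_apply,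
      mul_comm] using (congrFun (Matrix.mulVec_cramer (b.toMatrix v) (b.equivFun q)) i).symm
  rw [hq]
  exact Submodule.sum_mem _ fun j _ => Submodule.smul_mem _ _ (Submodule.subset_span ⟨j, rfl⟩)

theorem minorsIdeal_le_colon {R F κ : Type} [CommRing R] [AddCommGroup F] [Module R F]
    [Fintype κ] [DecidableEq κ] (b : Module.Basis κ R F) (N : Submodule R F) :
    minorsIdeal b N ≤ N.colon Set.univ := by
  refine Ideal.span_le.mpr ?_
  rintro _ ⟨v, hv, rfl⟩
  refine Submodule.mem_colon.mpr fun q _ => ?_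
  have := b.det_smul_mem_span v q
  rw [Module.Basis.det_apply] at this
  exact Submodule.span_le.mpr (Set.range_subset_iff.mpr hv) this

theorem C_mul_mem_reesAlg_of_mem_minorsIdeal {R : Type} [CommRing R] {r : ℕ}
    (M : Submodule R (Fin r → R)) {n : ℕ} {κ : Type} [Fintype κ] [DecidableEq κ]
    (b : Module.Basis κ R (homogeneousSubmodule (Fin r) R n)) {d : R}
    (hd : d ∈ minorsIdeal b ((SnM M n).comap (homogeneousSubmodule (Fin r) R n).subtype))
    {q : MvPolynomial (Fin r) R} (hq : q ∈ homogeneousSubmodule (Fin r) R n) :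
    C d * q ∈ ReesAlg M := by
  have h := Submodule.mem_colon.mp (minorsIdeal_le_colon b _ hd) ⟨q, hq⟩ trivial
  rw [Submodule.mem_comap, Submodule.coe_subtype, SetLike.val_smul, smul_eq_C_mul] at h
  exact h.1

-- For `i ≥ f.natDegree` the exponent truncates to `0`, so the condition is vacuous there.
theorem MemIntClosure.exists_monic {R : Type} [CommRing R] {I : Ideal R} {x : R}
    (hx : MemIntClosure I x) :
    ∃ f : Polynomial R, f.Monic ∧ (∀ i, f.coeff i ∈ I ^ (f.natDegree - i)) ∧ f.IsRoot x := by
  obtain ⟨m, a, -, ha, hroot⟩ := hx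
  set g : Polynomial R := ∑ i ∈ Finset.range m, Polynomial.C (a i) * Polynomial.X ^ i
  have hg : g.degree < m := by
    simpa [g, ← Fin.sum_univ_eq_sum_range] using
      Polynomial.degree_sum_fin_lt (fun i : Fin m => a i)
  have hmonic : (Polynomial.X ^ m + g).Monic := Polynomial.monic_X_pow_add hg
  refine ⟨_, hmonic, fun i => ?_, by simpa [g, Polynomial.eval_finsetSum] using hroot⟩
  nontriviality R
  rw [Polynomial.natDegree_add_eq_left_of_degree_lt (by simpa using hg),
    Polynomial.natDegree_X_pow]
  rcases lt_or_ge i m with hi | hi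
  · simpa [g, Polynomial.coeff_X_pow, Polynomial.finsetSum_coeff, Polynomial.coeff_C_mul_X_pow,
      hi, hi.ne] using ha i hi
  · simp [Nat.sub_eq_zero_of_le hi]

section IntegralOverIdeal

variable {R A : Type*} [CommRing R] [CommRing A] [Algebra R A] {S : Subalgebra R A}
  {I : Ideal R} {p : A}

theorem algebraMap_mul_pow_mem_of_mem_pow (hp : ∀ a ∈ I, algebraMap R A a * p ∈ S) :
    ∀ {k : ℕ} {a : R}, a ∈ I ^ k → algebraMap R A a * p ^ k ∈ S
  | 0, a, _ => by rw [pow_zero, mul_one]; exact S.algebraMap_mem a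
  | k + 1, a, ha => by
    rw [pow_succ] at ha
    refine Submodule.mul_induction_on ha (fun y hy z hz => ?_) (fun y z hy hz => ?_)
    · have hyz : algebraMap R A (y * z) * p ^ (k + 1) =
          (algebraMap R A y * p ^ k) * (algebraMap R A z * p) := by
        rw [map_mul]; ring
      rw [hyz]
      exact mul_mem (algebraMap_mul_pow_mem_of_mem_pow hp hy) (hp z hz)
    · rw [map_add, add_mul]
      exact add_mem hy hz

theorem isIntegral_algebraMap_mul_of_coeff_mem_pow (hp : ∀ a ∈ I, algebraMap R A a * p ∈ S)
    {f : Polynomial R} (hf : f.Monic) (hcoeff : ∀ i, f.coeff i ∈ I ^ (f.natDegree - i)) {x : R}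
    (hx : f.IsRoot x) : IsIntegral S (algebraMap R A x * p) := by
  nontriviality A
  set g := (f.map (algebraMap R A)).scaleRoots p
  have hlifts : g ∈ Polynomial.lifts (algebraMap S A) := by
    refine (Polynomial.lifts_iff_coeff_lifts g).mpr fun i => ?_
    rw [Polynomial.coeff_scaleRoots, hf.natDegree_map, Polynomial.coeff_map]
    exact ⟨⟨_, algebraMap_mul_pow_mem_of_mem_pow hp (hcoeff i)⟩, rfl⟩
  obtain ⟨q, hq, -, hqm⟩ := Polynomial.lifts_and_natDegree_eq_and_monic hlifts
    ((Polynomial.monic_scaleRoots_iff p).mpr (hf.map _))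
  refine ⟨q, hqm, ?_⟩
  rw [← Polynomial.eval_map, hq, mul_comm, Polynomial.scaleRoots_eval_mul,
    Polynomial.eval_map_algebraMap, Polynomial.aeval_algebraMap_apply_eq_algebraMap_eval,
    hx.eq_zero, map_zero, mul_zero]

end IntegralOverIdeal

theorem intClosure_minors_mul_mem_V_general {R : Type} [CommRing R] {r : ℕ}
    (M : Submodule R (Fin r → R)) (n : ℕ)
    {κ : Type} [Fintype κ] [DecidableEq κ]
    (b : Module.Basis κ R (homogeneousSubmodule (Fin r) R n))
    (x : R)
    (hx : MemIntClosure
      (minorsIdeal b (Submodule.comap (homogeneousSubmodule (Fin r) R n).subtype (SnM M n))) x)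
    (p : MvPolynomial (Fin r) R) (hp : p ∈ homogeneousSubmodule (Fin r) R n) :
    C x * p ∈ integralClosure (ReesAlg M) (MvPolynomial (Fin r) R) ∧
      C x * p ∈ homogeneousSubmodule (Fin r) R n := by
  obtain ⟨f, hf, hcoeff, hroot⟩ := hx.exists_monic
  have hminors : ∀ a ∈ _, algebraMap R _ a * p ∈ ReesAlg M := fun a ha =>
    C_mul_mem_reesAlg_of_mem_minorsIdeal M b ha hp
  refine ⟨isIntegral_algebraMap_mul_of_coeff_mem_pow hminors hf hcoeff hroot, ?_⟩
  rw [← smul_eq_C_mul]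
  exact Submodule.smul_mem _ x hp

/-- For `M ⊆ F = Rʳ` over a Noetherian ring and `n ≥ 1`, with `I(Sₙ(M))` the ideal of
maximal minors of a presentation of `Sₙ(M) ⊆ Sₙ(F)` (w.r.t. any basis of `Sₙ(F)`), one has
`\overline{I(Sₙ(M))}·Sₙ(F) ⊆ Vₙ`, where `V` is the integral closure of `S(M)` in `S(F)`
and `Vₙ` is its degree-`n` component. -/
theorem intClosure_minors_mul_mem_V {R : Type} [CommRing R] [IsNoetherianRing R] {r : ℕ}
    (M : Submodule R (Fin r → R)) (n : ℕ) (hn : 1 ≤ n)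
    {κ : Type} [Fintype κ] [DecidableEq κ]
    (b : Module.Basis κ R (homogeneousSubmodule (Fin r) R n))
    (x : R)
    (hx : MemIntClosure
      (minorsIdeal b (Submodule.comap (homogeneousSubmodule (Fin r) R n).subtype (SnM M n))) x)
    (p : MvPolynomial (Fin r) R) (hp : p ∈ homogeneousSubmodule (Fin r) R n) :
    C x * p ∈ integralClosure (ReesAlg M) (MvPolynomial (Fin r) R) ∧
      C x * p ∈ homogeneousSubmodule (Fin r) R n :=
  intClosure_minors_mul_mem_V_general M n b x hx p hp
end

section
/- Let (R, 𝔪, k) be a Noetherian local ring, F a finitely generated free R-module, and M ⊆ F a submodule such that F/M is nonzero of finite length. Then there exists a basis {T₁,…,T_r} of F and generators {L₁,…,L_d} of a submodule M' with M ⊆ M' ⊆ F and F/M' ≅ k, such that the coefficient of T₁ in each L_j lies in 𝔪. In particular, there is a surjective R-linear map f₁ : F → R with f₁(M) ⊆ 𝔪. -/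
/-!
Enlarge `M` to a maximal submodule `M'`; then `F ⧸ M' ≅ k`, and lifting `F → F ⧸ M' ≅ k` along
`R → k` (possible as `F` is free) gives a functional `g : F → R` with `g(M') ⊆ 𝔪` that takes a
unit value on some standard basis vector. Over any commutative ring such a functional is a
coordinate function of a suitable basis, because a spanning family of `rank F` vectors in `F` is a
basis.
-/

open IsLocalRing

namespace Module.Basis

variable {R M ι : Type*} [CommRing R] [AddCommGroup M] [Module R M] [Fintype ι] [DecidableEq ι]

theorem exists_basis_coord_eq_of_isUnit [Nontrivial R] (b : Basis ι R M) (g : M →ₗ[R] R) {i : ι}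
    (hi : IsUnit (g (b i))) (j : ι) : ∃ T : Basis ι R M, T.coord j = g := by
  obtain ⟨u, hu⟩ := hi
  set v : M := (↑u⁻¹ : R) • b i
  have hv : g v = 1 := by simp [v, ← hu]
  let t : ι → M := fun k => if k = i then v else b k - g (b k) • v
  have hspan : ⊤ ≤ Submodule.span R (Set.range t) := by
    have hvt : v ∈ Submodule.span R (Set.range t) := Submodule.subset_span ⟨i, by simp [t]⟩
    rw [← b.span_eq, Submodule.span_le]
    rintro _ ⟨k, rfl⟩
    by_cases hk : k = i
    · subst hk
      have : b k = (u : R) • v := by simp [v, smul_smul]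
      rw [this]
      exact Submodule.smul_mem _ _ hvt
    · have : b k = t k + g (b k) • v := by simp [t, hk]
      rw [SetLike.mem_coe, this]
      exact Submodule.add_mem _ (Submodule.subset_span ⟨k, rfl⟩) (Submodule.smul_mem _ _ hvt)
  let T := basisOfTopLeSpanOfCardEqFinrank t hspan (finrank_eq_card_basis b).symm
  have hT : T.coord i = g := T.ext fun k => by
    rw [coord_apply, repr_self, show T k = t k by simp [T]]
    by_cases hk : k = i
    · simp [t, hk, hv]
    · simp [t, hk, hv, Ne.symm hk]
  refine ⟨T.reindex (Equiv.swap i j), ?_⟩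
  ext x
  simp [← hT, coord_apply]

end Module.Basis

namespace IsLocalRing

variable {R M : Type*} [CommRing R] [IsLocalRing R] [AddCommGroup M] [Module R M]

theorem exists_isUnit_apply_basis {ι : Type*} (b : Module.Basis ι R M) (g : M →ₗ[R] R)
    {x : M} (hx : g x ∉ maximalIdeal R) : ∃ i, IsUnit (g (b i)) := by
  by_contra! h
  have : ⊤ ≤ Submodule.comap g (maximalIdeal R) := by
    rw [← b.span_eq, Submodule.span_le]
    rintro _ ⟨i, rfl⟩
    exact h i
  exact hx (this Submodule.mem_top)

theorem nonempty_quotient_linearEquiv_residue {N : Submodule R M} (hN : IsCoatom N) :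
    Nonempty ((M ⧸ N) ≃ₗ[R] R ⧸ maximalIdeal R) := by
  have := isSimpleModule_iff_isCoatom.mpr hN
  obtain ⟨I, hI, e⟩ := isSimpleModule_iff_quot_maximal.mp this
  rwa [eq_maximalIdeal hI] at e

theorem exists_basis_coord_mem_maximalIdeal {ι : Type*} [Fintype ι] [DecidableEq ι]
    (b : Module.Basis ι R M) {N : Submodule R M} (e : (M ⧸ N) ≃ₗ[R] R ⧸ maximalIdeal R)
    (j : ι) : ∃ T : Module.Basis ι R M, ∀ y ∈ N, T.coord j y ∈ maximalIdeal R := by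
  have := Module.Projective.of_basis b
  set π : M →ₗ[R] R ⧸ maximalIdeal R := e.toLinearMap ∘ₗ N.mkQ
  obtain ⟨g, hg⟩ := Module.projective_lifting_property (maximalIdeal R).mkQ π
    (Submodule.mkQ_surjective _)
  have hgπ (x : M) : Ideal.Quotient.mk _ (g x) = π x := LinearMap.congr_fun hg x
  obtain ⟨x, hx⟩ := (e.surjective.comp N.mkQ_surjective) 1
  have hgx : g x ∉ maximalIdeal R := by
    rw [← Ideal.Quotient.eq_zero_iff_mem, hgπ, show π x = 1 from hx]
    exact one_ne_zero
  obtain ⟨i, hi⟩ := exists_isUnit_apply_basis b g hgx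
  obtain ⟨T, hT⟩ := b.exists_basis_coord_eq_of_isUnit g hi j
  refine ⟨T, fun y hy => ?_⟩
  rw [hT, ← Ideal.Quotient.eq_zero_iff_mem, hgπ]
  simp [π, (Submodule.Quotient.mk_eq_zero N).mpr hy]

end IsLocalRing

theorem exists_basis_first_coeff_mem_maximalIdeal_general {R : Type} [CommRing R]
    [IsNoetherianRing R] [IsLocalRing R] {r : ℕ} (hr : 0 < r)
    (M : Submodule R (Fin r → R))
    (hne : M ≠ ⊤) :
    ∃ (M' : Submodule R (Fin r → R)) (T : Module.Basis (Fin r) R (Fin r → R)) (d : ℕ)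
      (L : Fin d → (Fin r → R)),
      M ≤ M' ∧ Submodule.span R (Set.range L) = M' ∧
      Nonempty (((Fin r → R) ⧸ M') ≃ₗ[R] R ⧸ maximalIdeal R) ∧
      (∀ j, T.repr (L j) ⟨0, hr⟩ ∈ maximalIdeal R) ∧
      Function.Surjective (T.coord ⟨0, hr⟩) ∧
      ∀ y ∈ M, T.coord ⟨0, hr⟩ y ∈ maximalIdeal R := by
  obtain ⟨M', hM', hMM'⟩ := (eq_top_or_exists_le_coatom M).resolve_left hne
  obtain ⟨e⟩ := nonempty_quotient_linearEquiv_residue hM'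
  obtain ⟨T, hT⟩ := exists_basis_coord_mem_maximalIdeal (Pi.basisFun R (Fin r)) e ⟨0, hr⟩
  obtain ⟨d, L, hL⟩ :=
    Submodule.fg_iff_exists_fin_generating_family.mp (IsNoetherian.noetherian M')
  refine ⟨M', T, d, L, hMM', hL, ⟨e⟩, fun j => hT _ (hL ▸ Submodule.subset_span ⟨j, rfl⟩),
    fun a => ⟨a • T ⟨0, hr⟩, by simp⟩, fun y hy => hT y (hMM' hy)⟩

/-- Let `(R, 𝔪, k)` be Noetherian local, `F = Rʳ` free, `M ⊆ F` with `F/M` nonzero of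
finite length. Then there are a submodule `M'` with `M ⊆ M' ⊆ F` and `F/M' ≅ k`, a basis
`T` of `F` and generators `L₁,…,L_d` of `M'` such that the coefficient of `T₁` in each
`L_j` lies in `𝔪`; in particular the first coordinate functional `f₁ = T.coord 1` is a
surjective linear map `F → R` with `f₁(M) ⊆ 𝔪`. -/
theorem exists_basis_first_coeff_mem_maximalIdeal {R : Type} [CommRing R]
    [IsNoetherianRing R] [IsLocalRing R] {r : ℕ} (hr : 0 < r)
    (M : Submodule R (Fin r → R))
    (hlen : IsFiniteLength R ((Fin r → R) ⧸ M)) (hne : M ≠ ⊤) :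
    ∃ (M' : Submodule R (Fin r → R)) (T : Module.Basis (Fin r) R (Fin r → R)) (d : ℕ)
      (L : Fin d → (Fin r → R)),
      M ≤ M' ∧ Submodule.span R (Set.range L) = M' ∧
      Nonempty (((Fin r → R) ⧸ M') ≃ₗ[R] R ⧸ maximalIdeal R) ∧
      (∀ j, T.repr (L j) ⟨0, hr⟩ ∈ maximalIdeal R) ∧
      Function.Surjective (T.coord ⟨0, hr⟩) ∧
      ∀ y ∈ M, T.coord ⟨0, hr⟩ y ∈ maximalIdeal R :=
  exists_basis_first_coeff_mem_maximalIdeal_general hr M hne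
end

section
/- Let (R, 𝔪) be a Noetherian local ring. Suppose there exist a nonzero R-module Q of finite length and a finitely generated free R-module F mapping onto Q with kernel M, such that the integral closure of the Rees algebra S(M) in S(F) is a finitely generated S(M)-module. Then R is analytically unramified, i.e., the 𝔪-adic completion of R is reduced. -/
set_option maxHeartbeats 1000000
set_option synthInstance.maxHeartbeats 400000
open MvPolynomial IsLocalRing

/-! Since `Q ≠ 0` has finite length, it is killed by some `𝔪ᴺ` and maps onto `R/𝔪`; lifting
`F → Q → R/𝔪` gives a linear form `λ : F → R` with `λ(M) ⊆ 𝔪` and `λ(e)` a unit for some `e`,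
while `𝔪ᴺ e ⊆ M`. The map `S(F) → R[t]` induced by `λ` sends `S(M)` into the Rees algebra
`R[It]`, `I = λ(M)`, so the finitely generated `S(M)`-module `T = integralClosure S(M) S(F)` is sent
into `⊕ I^(j-D) tʲ` for some `D`. If `xᵐ ∈ 𝔪^(Nsm)`, then `(x eˢ)ᵐ ∈ S(M)`, so `x eˢ ∈ T`, and the
coefficient of `tˢ` gives `x ∈ I^(s-D) ⊆ 𝔪^(s-D)`. Such a uniform bound on the `𝔪`-adic order of
`m`-th roots forces every nilpotent of the completion to vanish. -/

section General

variable {R : Type*} [CommRing R]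

theorem coeff_mul_mem_pow_sub {I : Ideal R} {p q : Polynomial R} (hp : p ∈ reesAlgebra I)
    {D : ℕ} (hq : q.natDegree ≤ D) (j : ℕ) : (p * q).coeff j ∈ I ^ (j - D) := by
  rw [Polynomial.coeff_mul]
  refine sum_mem fun ab hab => ?_
  rw [Finset.HasAntidiagonal.mem_antidiagonal] at hab
  rcases le_or_gt ab.2 D with h | h
  · exact Ideal.mul_mem_right _ _ (Ideal.pow_le_pow_right (by omega) (hp ab.1))
  · simp [Polynomial.coeff_eq_zero_of_natDegree_lt (hq.trans_lt h)]

theorem exists_coeff_mem_pow_sub_of_fg {A : Type*} [CommRing A] [Algebra R A]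
    {S : Subalgebra R A} {φ : A →ₐ[R] Polynomial R} {I : Ideal R}
    (hS : S.map φ ≤ reesAlgebra I) {P : Submodule S A} (hP : P.FG) :
    ∃ D, ∀ w ∈ P, ∀ j, (φ w).coeff j ∈ I ^ (j - D) := by
  classical
  obtain ⟨s, rfl⟩ := hP
  refine ⟨s.sup fun b => (φ b).natDegree, fun w hw j => ?_⟩
  obtain ⟨f, -, rfl⟩ := Submodule.mem_span_finset.1 hw
  rw [map_sum, Polynomial.finsetSum_coeff]
  refine sum_mem fun b hb => ?_
  rw [Subalgebra.smul_def, smul_eq_mul, map_mul]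
  exact coeff_mul_mem_pow_sub (hS ⟨f b, (f b).2, rfl⟩)
    (Finset.le_sup (f := fun b => (φ b).natDegree) hb) j

section LocalRing

variable [IsLocalRing R]

theorem exists_maximalIdeal_pow_le_annihilator (Q : Type*) [AddCommGroup Q] [Module R Q]
    [IsNoetherian R Q] [IsArtinian R Q] :
    ∃ N, maximalIdeal R ^ N ≤ Module.annihilator R Q := by
  obtain ⟨N, hN⟩ := IsArtinian.monotone_stabilizes
    ⟨fun n => OrderDual.toDual (maximalIdeal R ^ n • (⊤ : Submodule R Q)),
      fun _ _ h => Submodule.smul_mono_left (Ideal.pow_le_pow_right h)⟩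
  have hstable : maximalIdeal R ^ N • (⊤ : Submodule R Q)
      ≤ maximalIdeal R • maximalIdeal R ^ N • (⊤ : Submodule R Q) := by
    rw [← Submodule.mul_smul, ← pow_succ']
    exact (congrArg OrderDual.ofDual (hN (N + 1) N.le_succ)).le
  have hbot := Submodule.eq_bot_of_le_smul_of_le_jacobson_bot _ _ (IsNoetherian.noetherian _)
    hstable (maximalIdeal_le_jacobson ⊥)
  refine ⟨N, fun c hc => Module.mem_annihilator.2 fun q => ?_⟩
  simpa [hbot] using Submodule.smul_mem_smul hc (Submodule.mem_top (x := q))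

theorem exists_surjective_quotient_maximalIdeal (Q : Type*) [AddCommGroup Q] [Module R Q]
    [Module.Finite R Q] [Nontrivial Q] :
    ∃ ψ : Q →ₗ[R] R ⧸ maximalIdeal R, Function.Surjective ψ := by
  obtain ⟨N, hN⟩ := IsCoatomic.exists_coatom (α := Submodule R Q)
  obtain ⟨I, hI, ⟨e⟩⟩ := isSimpleModule_iff_quot_maximal.1 (isSimpleModule_iff_isCoatom.2 hN)
  obtain rfl := eq_maximalIdeal hI
  exact ⟨e.toLinearMap ∘ₗ N.mkQ, e.surjective.comp N.mkQ_surjective⟩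

theorem exists_map_ker_le_maximalIdeal_isUnit {F Q : Type*} [AddCommGroup F] [Module R F]
    [Module.Projective R F] [AddCommGroup Q] [Module R Q] [Module.Finite R Q] [Nontrivial Q]
    {g : F →ₗ[R] Q} (hg : Function.Surjective g) :
    ∃ (lam : F →ₗ[R] R) (e : F), (LinearMap.ker g).map lam ≤ maximalIdeal R ∧ IsUnit (lam e) := by
  obtain ⟨ψ, hψ⟩ := exists_surjective_quotient_maximalIdeal (R := R) Q
  obtain ⟨lam, hlam⟩ :=
    Module.projective_lifting_property (maximalIdeal R).mkQ (ψ ∘ₗ g) (Submodule.mkQ_surjective _)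
  have hres : ∀ v, Ideal.Quotient.mk _ (lam v) = ψ (g v) := fun v => LinearMap.congr_fun hlam v
  obtain ⟨e, he⟩ := (hψ.comp hg) 1
  refine ⟨lam, e, ?_, notMem_maximalIdeal.1 fun hmem => ?_⟩
  · rintro _ ⟨v, hv, rfl⟩
    rw [← Ideal.Quotient.eq_zero_iff_mem, hres, LinearMap.mem_ker.1 hv, map_zero]
  · rw [← Ideal.Quotient.eq_zero_iff_mem, hres] at hmem
    exact one_ne_zero (he.symm.trans hmem)

end LocalRing

theorem isReduced_adicCompletion_of_forall_pow_mem (I : Ideal R)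
    (h : ∀ n m, m ≠ 0 → ∃ K, ∀ x : R, x ^ m ∈ I ^ K → x ∈ I ^ n) :
    IsReduced (AdicCompletion I R) := by
  refine ⟨fun z ⟨m, hm⟩ => ?_⟩
  rcases eq_or_ne m 0 with rfl | hm0
  · simpa using congrArg (z * ·) hm
  obtain ⟨f, rfl⟩ := AdicCompletion.mk_surjective I R z
  refine AdicCompletion.mk_zero_of I R f ⟨0, fun n _ => ?_⟩
  obtain ⟨K, hK⟩ := h n m hm0
  refine ⟨max n K, le_max_left _ _, n, le_rfl, ?_⟩
  have hfm := congrArg (AdicCompletion.evalₐ I (max n K)) hm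
  rw [map_pow, map_zero, AdicCompletion.evalₐ_mk, ← map_pow,
    Ideal.Quotient.eq_zero_iff_mem] at hfm
  simpa using hK _ (Ideal.pow_le_pow_right (le_max_right n K) hfm)

end General

section ReesAlg

variable {R : Type} [CommRing R] {r : ℕ}

theorem linForm_smul (c : R) (v : Fin r → R) : linForm (c • v) = C c * linForm v := by
  simp [linForm, Finset.mul_sum, mul_assoc]

theorem linForm_mem_reesAlg {M : Submodule R (Fin r → R)} {v : Fin r → R} (hv : v ∈ M) :
    linForm v ∈ ReesAlg M :=
  Algebra.subset_adjoin ⟨v, hv, rfl⟩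

theorem C_mul_linForm_pow_mem_reesAlg {M : Submodule R (Fin r → R)} {J : Ideal R}
    {e : Fin r → R} (hJ : ∀ c ∈ J, c • e ∈ M) {q : ℕ} {c : R} (hc : c ∈ J ^ q) :
    C c * linForm e ^ q ∈ ReesAlg M := by
  induction q generalizing c with
  | zero => simpa using (ReesAlg M).algebraMap_mem c
  | succ q ih =>
    rw [pow_succ'] at hc
    refine Submodule.mul_induction_on hc (fun a ha b hb => ?_) (fun x y hx hy => ?_)
    · have hab : C (a * b) * linForm e ^ (q + 1) = linForm (a • e) * (C b * linForm e ^ q) := by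
        rw [linForm_smul, map_mul]; ring
      rw [hab]
      exact mul_mem (linForm_mem_reesAlg (hJ a ha)) (ih hb)
    · simpa [add_mul] using add_mem hx hy

/-- The map of symmetric algebras `S(Rʳ) → S(R) = R[X]` induced by a linear form `lam`. -/
noncomputable def symMap (lam : (Fin r → R) →ₗ[R] R) :
    MvPolynomial (Fin r) R →ₐ[R] Polynomial R :=
  aeval fun i => Polynomial.C (lam (Pi.single i 1)) * Polynomial.X

theorem symMap_linForm (lam : (Fin r → R) →ₗ[R] R) (v : Fin r → R) :
    symMap lam (linForm v) = Polynomial.C (lam v) * Polynomial.X := by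
  conv_rhs => rw [← Finset.univ_sum_single v]
  have hsingle : ∀ i, Pi.single i (v i) = v i • (Pi.single i 1 : Fin r → R) := fun i => by
    rw [← Pi.single_smul', smul_eq_mul, mul_one]
  simp [symMap, linForm, Finset.sum_mul, hsingle, mul_assoc]

theorem reesAlg_map_symMap_le (M : Submodule R (Fin r → R)) (lam : (Fin r → R) →ₗ[R] R) :
    (ReesAlg M).map (symMap lam) ≤ reesAlgebra (M.map lam) := by
  rw [ReesAlg, AlgHom.map_adjoin, Algebra.adjoin_le_iff]
  rintro _ ⟨_, ⟨v, hv, rfl⟩, rfl⟩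
  rw [SetLike.mem_coe, symMap_linForm, Polynomial.C_mul_X_eq_monomial, reesAlgebra.monomial_mem,
    pow_one]
  exact Submodule.mem_map_of_mem hv

theorem mem_pow_sub_of_pow_mem {M : Submodule R (Fin r → R)} {lam : (Fin r → R) →ₗ[R] R}
    {e : Fin r → R} (hu : IsUnit (lam e)) {J : Ideal R} (hJ : ∀ c ∈ J, c • e ∈ M) {D : ℕ}
    (hD : ∀ w ∈ integralClosure (ReesAlg M) (MvPolynomial (Fin r) R), ∀ j,
      (symMap lam w).coeff j ∈ (M.map lam) ^ (j - D))
    {x : R} {s m : ℕ} (hm : m ≠ 0) (hx : x ^ m ∈ J ^ (s * m)) :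
    x ∈ (M.map lam) ^ (s - D) := by
  set w := C x * linForm e ^ s
  have hwm : w ^ m ∈ ReesAlg M := by
    rw [mul_pow, ← pow_mul, ← map_pow]
    exact C_mul_linForm_pow_mem_reesAlg hJ hx
  have hw : IsIntegral (ReesAlg M) w :=
    .of_pow (Nat.pos_of_ne_zero hm) (isIntegral_algebraMap (x := (⟨w ^ m, hwm⟩ : ReesAlg M)))
  have hcoeff : (symMap lam w).coeff s = x * lam e ^ s := by
    have hC : symMap lam (C x) = Polynomial.C x := aeval_C _ _
    rw [map_mul, map_pow, hC, symMap_linForm, mul_pow, ← mul_assoc, ← Polynomial.C_pow,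
      ← map_mul, Polynomial.coeff_C_mul_X_pow, if_pos rfl]
  have := hD w hw s
  rwa [hcoeff, Ideal.mul_unit_mem_iff_mem _ (hu.pow s)] at this

end ReesAlg

theorem analyticallyUnramified_of_integralClosure_finite_general {R : Type} [CommRing R]
    [IsLocalRing R] {r : ℕ}
    (Q : Type) [AddCommGroup Q] [Module R Q] [Nontrivial Q]
    (hQ : IsFiniteLength R Q)
    (g : (Fin r → R) →ₗ[R] Q) (hg : Function.Surjective g)
    (M : Submodule R (Fin r → R)) (hM : M = LinearMap.ker g)
    (hfin : Module.Finite (ReesAlg M) (integralClosure (ReesAlg M) (MvPolynomial (Fin r) R))) :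
    IsReduced (AdicCompletion (maximalIdeal R) R) := by
  subst hM
  obtain ⟨_, _⟩ := isFiniteLength_iff_isNoetherian_isArtinian.1 hQ
  obtain ⟨N, hN⟩ := exists_maximalIdeal_pow_le_annihilator (R := R) Q
  obtain ⟨lam, e, hlam, hu⟩ := exists_map_ker_le_maximalIdeal_isUnit hg
  obtain ⟨D, hD⟩ := exists_coeff_mem_pow_sub_of_fg (reesAlg_map_symMap_le _ lam)
    (P := (integralClosure _ _).toSubmodule) (Module.Finite.iff_fg.1 hfin)
  have hJ : ∀ c ∈ maximalIdeal R ^ N, c • e ∈ LinearMap.ker g := fun c hc => by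
    rw [LinearMap.mem_ker, map_smul, Module.mem_annihilator.1 (hN hc)]
  refine isReduced_adicCompletion_of_forall_pow_mem _ fun n m hm =>
    ⟨N * ((n + D) * m), fun x hx => ?_⟩
  rw [pow_mul] at hx
  have hxI := mem_pow_sub_of_pow_mem hu hJ hD hm hx
  rw [Nat.add_sub_cancel] at hxI
  exact Ideal.pow_right_mono hlam n hxI

/-- If there exist a nonzero finite length module `Q`, a finitely generated free module
`F = Rʳ` mapping onto `Q` with kernel `M`, such that the integral closure of `S(M)` in
`S(F)` is a finitely generated `S(M)`-module, then the Noetherian local ring `R` is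
analytically unramified. -/
theorem analyticallyUnramified_of_integralClosure_finite {R : Type} [CommRing R]
    [IsNoetherianRing R] [IsLocalRing R] {r : ℕ}
    (Q : Type) [AddCommGroup Q] [Module R Q] [Nontrivial Q]
    (hQ : IsFiniteLength R Q)
    (g : (Fin r → R) →ₗ[R] Q) (hg : Function.Surjective g)
    (M : Submodule R (Fin r → R)) (hM : M = LinearMap.ker g)
    (hfin : Module.Finite (ReesAlg M) (integralClosure (ReesAlg M) (MvPolynomial (Fin r) R))) :
    IsReduced (AdicCompletion (maximalIdeal R) R) :=
  analyticallyUnramified_of_integralClosure_finite_general Q hQ g hg M hM hfin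
end

section
/- Let (R, 𝔪) be a Noetherian local ring with 𝔪-adic completion R̂, F a finitely generated free R-module, and M ⊆ F a submodule. For every n ≥ k ≥ 0, the intersection of S_{n-k}(M̂)·S_k(F̂) with Sₙ(F) inside Sₙ(F̂) equals S_{n-k}(M)·S_k(F), where M̂ = R̂ ⊗_R M ⊆ R̂ ⊗_R F = F̂. -/
/-!
Writing `L(M) ⊆ S₁(F)` for the linear forms coming from `M`, the graded piece `Sₐ(M)` is the
power `L(M)ᵈ`, and `L(M̂)` is the `R̂`-span of `L(M)`. Hence `S_{n-k}(M̂)·S_k(F̂)` is the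
`R̂`-span of `N = S_{n-k}(M)·S_k(F) ⊆ Sₙ(F)`. If `p ∈ Sₙ(F)` lies in that span, reducing the
coefficients modulo `𝔪ᵗ` (through `R̂ → R/𝔪ᵗ`) gives `p ∈ N + 𝔪ᵗ Sₙ(F)` for every `t`; as
`Sₙ(F)` is a finite `R`-module, Krull's intersection theorem for `Sₙ(F)/N` yields `p ∈ N`.
-/
set_option maxHeartbeats 1000000
set_option synthInstance.maxHeartbeats 400000
open MvPolynomial IsLocalRing

/-- The extension `M̂ = R̂ ⊗_R M ⊆ R̂ ⊗_R F = F̂` of a submodule `M ⊆ F = Rʳ` to the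
`𝔪`-adic completion `R̂` of `R` (realised, using flatness of `R̂`, as the `R̂`-span of the
image of `M` in `F̂ = R̂ʳ`). -/
noncomputable def hatModule {R : Type} [CommRing R] [IsLocalRing R] {r : ℕ}
    (M : Submodule R (Fin r → R)) :
    Submodule (AdicCompletion (maximalIdeal R) R) (Fin r → AdicCompletion (maximalIdeal R) R) :=
  Submodule.span _ ((fun v i => algebraMap R (AdicCompletion (maximalIdeal R) R) (v i)) ''
    (M : Set (Fin r → R)))

namespace Submodule

theorem mem_of_forall_mem_sup_pow_smul {R M : Type*} [CommRing R] [IsNoetherianRing R]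
    [IsLocalRing R] [AddCommGroup M] [Module R M] {I : Ideal R} (hI : I ≠ ⊤)
    {N W : Submodule R M} (hW : W.FG) (hNW : N ≤ W) {x : M}
    (hx : ∀ t : ℕ, x ∈ N ⊔ I ^ t • W) : x ∈ N := by
  have : Module.Finite R W := Module.Finite.iff_fg.mpr hW
  set N' := N.comap W.subtype
  have hxW : x ∈ W := sup_le hNW smul_le_right (hx 0)
  have hsup (t : ℕ) : (N' ⊔ I ^ t • ⊤).map W.subtype = N ⊔ I ^ t • W := by
    rw [map_sup, map_comap_subtype, inf_eq_right.mpr hNW, map_smul'', map_top, range_subtype]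
  have hmk (t : ℕ) : N'.mkQ ⟨x, hxW⟩ ∈ (I ^ t • ⊤ : Submodule R (W ⧸ N')) := by
    have hx' : (⟨x, hxW⟩ : W) ∈ N' ⊔ I ^ t • ⊤ := by
      obtain ⟨y, hy, hyx⟩ := hsup t ▸ hx t
      rwa [show y = ⟨x, hxW⟩ from Subtype.ext hyx] at hy
    rwa [← comap_map_mkQ, mem_comap, map_smul'', map_top, range_mkQ] at hx'
  have hbot := Ideal.iInf_pow_smul_eq_bot_of_isLocalRing (M := W ⧸ N') I hI
  have h0 := (mem_iInf _).mpr hmk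
  rwa [hbot, mem_bot, mkQ_apply, Quotient.mk_eq_zero] at h0

theorem exists_mem_pow_of_mem_closure {R A : Type*} [CommSemiring R] [Semiring A]
    [Algebra R A] {L : Submodule R A} {x : A} (hx : x ∈ Submonoid.closure (L : Set A)) :
    ∃ i, x ∈ L ^ i := by
  induction hx using Submonoid.closure_induction with
  | mem x hx => exact ⟨1, by rwa [pow_one]⟩
  | one => exact ⟨0, by rw [pow_zero]; exact one_le.mp le_rfl⟩
  | mul x y _ _ hx hy =>
    obtain ⟨i, hi⟩ := hx
    obtain ⟨j, hj⟩ := hy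
    exact ⟨i + j, pow_add L i j ▸ mul_mem_mul hi hj⟩

theorem pow_le_toSubmodule_adjoin {R A : Type*} [CommSemiring R] [Semiring A]
    [Algebra R A] (L : Submodule R A) (d : ℕ) :
    L ^ d ≤ (Algebra.adjoin R (L : Set A)).toSubmodule := by
  induction d with
  | zero => exact one_le.mpr (Subalgebra.one_mem _)
  | succ d ih =>
    rw [pow_succ, ← (Subalgebra.isIdempotentElem_toSubmodule _).eq]
    refine mul_le_mul' ih ?_
    simpa only [span_eq] using Algebra.span_le_adjoin R (L : Set A)

end Submodule

namespace MvPolynomial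

section ExtendCoeffs

variable {σ R S : Type*} [CommSemiring R] [CommSemiring S] (f : R →+* S)

/-- For `f = algebraMap R R̂` this is `R̂ ⊗_R P ⊆ R̂ ⊗_R S(F)`, by flatness of `R̂`. -/
noncomputable def extendCoeffs (P : Submodule R (MvPolynomial σ R)) :
    Submodule S (MvPolynomial σ S) :=
  Submodule.span S (map f '' P)

theorem map_mem_extendCoeffs {P : Submodule R (MvPolynomial σ R)} {p : MvPolynomial σ R}
    (hp : p ∈ P) : map f p ∈ extendCoeffs f P :=
  Submodule.subset_span ⟨p, hp, rfl⟩

theorem extendCoeffs_mul (P Q : Submodule R (MvPolynomial σ R)) :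
    extendCoeffs f (P * Q) = extendCoeffs f P * extendCoeffs f Q := by
  apply le_antisymm
  · rw [extendCoeffs, Submodule.span_le]
    rintro _ ⟨x, hx, rfl⟩
    refine Submodule.mul_induction_on hx (fun a ha b hb => ?_) (fun a b ha hb => ?_)
    · rw [map_mul]
      exact Submodule.mul_mem_mul (map_mem_extendCoeffs f ha) (map_mem_extendCoeffs f hb)
    · rw [map_add]
      exact add_mem ha hb
  · rw [extendCoeffs, extendCoeffs, Submodule.span_mul_span, ← Set.image_mul]
    exact Submodule.span_mono (Set.image_mono (Submodule.mul_subset_mul _ _))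

theorem extendCoeffs_one : extendCoeffs f (1 : Submodule R (MvPolynomial σ R)) = 1 := by
  apply le_antisymm
  · rw [extendCoeffs, Submodule.span_le]
    rintro _ ⟨x, hx, rfl⟩
    obtain ⟨a, rfl⟩ := Submodule.mem_one.mp hx
    exact Submodule.mem_one.mpr ⟨f a, by rw [algebraMap_eq, algebraMap_eq, map_C]⟩
  · rw [Submodule.one_eq_span, Submodule.span_le, Set.singleton_subset_iff, ← map_one (map f)]
    exact map_mem_extendCoeffs f (Submodule.one_le.mp le_rfl)

theorem extendCoeffs_pow (P : Submodule R (MvPolynomial σ R)) (d : ℕ) :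
    extendCoeffs f (P ^ d) = extendCoeffs f P ^ d := by
  induction d with
  | zero => rw [pow_zero, pow_zero, extendCoeffs_one]
  | succ d ih => rw [pow_succ, pow_succ, extendCoeffs_mul, ih]

theorem extendCoeffs_homogeneousSubmodule (n : ℕ) :
    extendCoeffs f (homogeneousSubmodule σ R n) = homogeneousSubmodule σ S n := by
  apply le_antisymm
  · rw [extendCoeffs, Submodule.span_le]
    rintro _ ⟨p, hp, rfl⟩
    exact hp.map f
  · rw [homogeneousSubmodule_eq_finsupp_supported, AddMonoidAlgebra.supported_eq_span_single,
      Submodule.span_le]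
    rintro _ ⟨d, hd, rfl⟩
    show monomial d (1 : S) ∈ _
    rw [← map_one f, ← map_monomial]
    exact map_mem_extendCoeffs f (isHomogeneous_monomial 1 hd)

end ExtendCoeffs

theorem exists_mem_map_comp_eq_of_mem_extendCoeffs {σ R S T : Type*} [CommSemiring R]
    [CommSemiring S] [CommSemiring T] (f : R →+* S) (g : S →+* T)
    (hgf : Function.Surjective (g.comp f)) {P : Submodule R (MvPolynomial σ R)}
    {x : MvPolynomial σ S} (hx : x ∈ extendCoeffs f P) :
    ∃ y ∈ P, map g x = map (g.comp f) y := by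
  induction hx using Submodule.span_induction with
  | mem _ hx =>
    obtain ⟨y, hy, rfl⟩ := hx
    exact ⟨y, hy, map_map f g y⟩
  | zero => exact ⟨0, zero_mem P, by rw [map_zero, map_zero]⟩
  | add _ _ _ _ hx hx' =>
    obtain ⟨y, hy, hxy⟩ := hx
    obtain ⟨y', hy', hxy'⟩ := hx'
    exact ⟨y + y', add_mem hy hy', by rw [map_add, map_add, hxy, hxy']⟩
  | smul c _ _ hx =>
    obtain ⟨y, hy, hxy⟩ := hx
    obtain ⟨a, ha⟩ := hgf (g c)
    refine ⟨a • y, P.smul_mem a hy, ?_⟩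
    rw [smul_eq_C_mul, smul_eq_C_mul, map_mul, map_mul, map_C, map_C, ha, hxy]

theorem mem_ideal_smul_homogeneousSubmodule {σ R : Type*} [CommSemiring R] {I : Ideal R}
    {n : ℕ} {q : MvPolynomial σ R} (hq : q ∈ homogeneousSubmodule σ R n)
    (hI : ∀ d, coeff d q ∈ I) : q ∈ I • homogeneousSubmodule σ R n := by
  rw [← support_sum_monomial_coeff q]
  refine sum_mem fun d hd => ?_
  rw [← mul_one (coeff d q), ← smul_eq_mul, ← smul_monomial]
  exact Submodule.smul_mem_smul (hI d)
    (isWeightedHomogeneous_monomial 1 d 1 (hq (mem_support_iff.mp hd)))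

theorem map_mem_extendCoeffs_adicCompletion_iff {σ R : Type*} [Finite σ] [CommRing R]
    [IsNoetherianRing R] [IsLocalRing R] {I : Ideal R} (hI : I ≠ ⊤) {n : ℕ}
    {N : Submodule R (MvPolynomial σ R)} (hN : N ≤ homogeneousSubmodule σ R n)
    {p : MvPolynomial σ R} (hp : p ∈ homogeneousSubmodule σ R n) :
    map (algebraMap R (AdicCompletion I R)) p ∈ extendCoeffs (algebraMap R _) N ↔ p ∈ N := by
  refine ⟨fun h => ?_, map_mem_extendCoeffs _⟩
  refine Submodule.mem_of_forall_mem_sup_pow_smul hI (homogeneousSubmodule_fg σ R n) hN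
    fun t => ?_
  set ε := (AdicCompletion.evalₐ I t).toRingHom
  have hε : ε.comp (algebraMap R _) = Ideal.Quotient.mk (I ^ t) :=
    (AdicCompletion.evalₐ I t).comp_algebraMap
  obtain ⟨y, hy, hpy⟩ := exists_mem_map_comp_eq_of_mem_extendCoeffs _ ε
    (hε ▸ Ideal.Quotient.mk_surjective) h
  rw [map_map, hε] at hpy
  have hcoeff (d : σ →₀ ℕ) : coeff d (p - y) ∈ I ^ t := by
    rw [coeff_sub, ← Ideal.Quotient.eq, ← coeff_map, ← coeff_map, hpy]
  rw [← add_sub_cancel y p]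
  exact Submodule.add_mem_sup hy
    (mem_ideal_smul_homogeneousSubmodule (sub_mem hp (hN hy)) hcoeff)

section GradedPieces

variable {σ R : Type*} [CommSemiring R] {L : Submodule R (MvPolynomial σ R)}

theorem pow_le_homogeneousSubmodule (hL : L ≤ homogeneousSubmodule σ R 1) (d : ℕ) :
    L ^ d ≤ homogeneousSubmodule σ R d := by
  induction d with
  | zero => exact Submodule.one_le.mpr (isHomogeneous_one σ R)
  | succ d ih =>
    rw [pow_succ]
    exact (mul_le_mul' ih hL).trans (homogeneousSubmodule_mul d 1)

theorem homogeneousComponent_mem_pow (hL : L ≤ homogeneousSubmodule σ R 1) {x : MvPolynomial σ R}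
    (hx : x ∈ Algebra.adjoin R (L : Set (MvPolynomial σ R))) (d : ℕ) :
    homogeneousComponent d x ∈ L ^ d := by
  rw [← Subalgebra.mem_toSubmodule, Algebra.adjoin_eq_span] at hx
  induction hx using Submodule.span_induction with
  | mem z hz =>
    obtain ⟨i, hi⟩ := Submodule.exists_mem_pow_of_mem_closure hz
    rw [homogeneousComponent_of_mem (pow_le_homogeneousSubmodule hL i hi)]
    split_ifs with hid
    · exact hid ▸ hi
    · exact zero_mem _
  | zero => rw [map_zero]; exact zero_mem _
  | add _ _ _ _ hx hy => rw [map_add]; exact add_mem hx hy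
  | smul c _ _ hx => rw [map_smul]; exact Submodule.smul_mem _ c hx

theorem toSubmodule_adjoin_inf_homogeneousSubmodule (hL : L ≤ homogeneousSubmodule σ R 1)
    (d : ℕ) :
    (Algebra.adjoin R (L : Set (MvPolynomial σ R))).toSubmodule ⊓ homogeneousSubmodule σ R d =
      L ^ d := by
  refine le_antisymm (fun x hx => ?_)
    (le_inf (L.pow_le_toSubmodule_adjoin d) (pow_le_homogeneousSubmodule hL d))
  have hcomp := homogeneousComponent_mem_pow hL hx.1 d
  rwa [homogeneousComponent_of_mem hx.2, if_pos rfl] at hcomp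

end GradedPieces

end MvPolynomial

section Rees

variable {R : Type} [CommRing R] {r : ℕ}

theorem linForm_eq_linearCombination :
    (linForm : (Fin r → R) → MvPolynomial (Fin r) R) = Fintype.linearCombination R X := by
  funext v
  simp only [linForm, Fintype.linearCombination_apply, smul_eq_C_mul]

noncomputable def linearForms (M : Submodule R (Fin r → R)) :
    Submodule R (MvPolynomial (Fin r) R) :=
  M.map (Fintype.linearCombination R X)

theorem linearForms_le_homogeneousSubmodule_one (M : Submodule R (Fin r → R)) :
    linearForms M ≤ homogeneousSubmodule (Fin r) R 1 := by
  rw [homogeneousSubmodule_one_eq_span_X, ← Fintype.range_linearCombination]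
  exact LinearMap.map_le_range

theorem SnM_eq_pow (M : Submodule R (Fin r → R)) (d : ℕ) : SnM M d = linearForms M ^ d := by
  rw [SnM, ReesAlg, linForm_eq_linearCombination, ← Submodule.map_coe]
  exact toSubmodule_adjoin_inf_homogeneousSubmodule (linearForms_le_homogeneousSubmodule_one M) d

variable [IsLocalRing R]

theorem linearForms_hatModule (M : Submodule R (Fin r → R)) :
    linearForms (hatModule M) = extendCoeffs (algebraMap R _) (linearForms M) := by
  rw [linearForms, hatModule, Submodule.map_span, extendCoeffs, linearForms, Submodule.map_coe,
    Set.image_image, Set.image_image]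
  congr 2
  funext v
  rw [← linForm_eq_linearCombination, ← linForm_eq_linearCombination]
  simp only [linForm, map_sum, map_mul, map_C, map_X]

theorem SnM_hatModule (M : Submodule R (Fin r → R)) (d : ℕ) :
    SnM (hatModule M) d = extendCoeffs (algebraMap R _) (SnM M d) := by
  rw [SnM_eq_pow, SnM_eq_pow, linearForms_hatModule, extendCoeffs_pow]

end Rees

/-- For `M ⊆ F = Rʳ` over a Noetherian local ring `R` with completion `R̂`, and `n ≥ k`,
the intersection of `S_{n-k}(M̂)·S_k(F̂)` with `Sₙ(F)` inside `Sₙ(F̂)` is `S_{n-k}(M)·S_k(F)`: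
a homogeneous polynomial `p` of degree `n` over `R` lies in `S_{n-k}(M̂)·S_k(F̂)` after
extension of scalars iff it lies in `S_{n-k}(M)·S_k(F)`. -/
theorem completion_intersection {R : Type} [CommRing R] [IsNoetherianRing R] [IsLocalRing R]
    {r : ℕ} (M : Submodule R (Fin r → R)) (n k : ℕ) (hk : k ≤ n)
    (p : MvPolynomial (Fin r) R) (hp : p ∈ homogeneousSubmodule (Fin r) R n) :
    MvPolynomial.map (algebraMap R (AdicCompletion (maximalIdeal R) R)) p ∈
        SnM (hatModule M) (n - k) *
          homogeneousSubmodule (Fin r) (AdicCompletion (maximalIdeal R) R) k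
      ↔ p ∈ SnM M (n - k) * homogeneousSubmodule (Fin r) R k := by
  have hdeg :
      SnM M (n - k) * homogeneousSubmodule (Fin r) R k ≤ homogeneousSubmodule (Fin r) R n :=
    (mul_le_mul' inf_le_right le_rfl).trans
      ((homogeneousSubmodule_mul (n - k) k).trans_eq (by rw [Nat.sub_add_cancel hk]))
  rw [SnM_hatModule, ← extendCoeffs_homogeneousSubmodule (algebraMap R _), ← extendCoeffs_mul]
  exact map_mem_extendCoeffs_adicCompletion_iff (maximalIdeal.isMaximal R).ne_top hdeg hp
end

section
/- Let (R, 𝔪) be a Noetherian local ring, F free of rank r with basis T₁,…,T_r, and M ⊆ F generated by elements L₁,…,L_d each of whose T₁-coefficient lies in 𝔪. Then for any n ≥ k ≥ 0, the annihilator of the R-module Sₙ(F)/(S_{n-k}(M)·S_k(F)) is contained in 𝔪^{n-k}. -/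
set_option maxHeartbeats 1000000
set_option synthInstance.maxHeartbeats 400000
open MvPolynomial IsLocalRing

/-!
Send `T₁ ↦ X` and `Tᵢ ↦ 0` for `i ≠ 1`, an `R`-algebra map `R[T₁,…,T_r] → R[X]`. Each linear
form from `M` becomes `a X` with `a ∈ 𝔪`, so `S(M)` lands in the Rees algebra `⊕ 𝔪ᵐ Xᵐ`, while
`S_k(F)` lands in polynomials of degree `≤ k`. Hence the `Xⁿ`-coefficient of the image of any
element of `S_{n-k}(M)·S_k(F)` lies in `𝔪^{n-k}`; for `x T₁ⁿ` that coefficient is `x`.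
-/

open scoped Polynomial

section

variable {R : Type*} [CommRing R]

theorem Polynomial.coeff_mul_mem_pow_sub_of_mem_reesAlgebra {I : Ideal R} {s q : R[X]}
    (hs : s ∈ reesAlgebra I) {k : ℕ} (hq : q.natDegree ≤ k) (n : ℕ) :
    (s * q).coeff n ∈ I ^ (n - k) := by
  rw [Polynomial.coeff_mul]
  refine Submodule.sum_mem _ fun ⟨a, b⟩ hab => ?_
  rw [Finset.HasAntidiagonal.mem_antidiagonal] at hab
  by_cases hb : b ≤ k
  · exact Ideal.pow_le_pow_right (by omega)
      (Ideal.mul_mem_right _ _ ((mem_reesAlgebra_iff I s).1 hs a))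
  · rw [Polynomial.coeff_eq_zero_of_natDegree_lt (p := q) (by omega), mul_zero]
    exact zero_mem _

theorem MvPolynomial.natDegree_aeval_le {σ : Type*} {w : ℕ} (f : σ → R[X])
    (hf : ∀ i, (f i).natDegree ≤ w) (q : MvPolynomial σ R) :
    (aeval f q).natDegree ≤ q.totalDegree * w := by
  rw [aeval_eq_eval₂Hom, coe_eval₂Hom, eval₂_eq]
  refine Polynomial.natDegree_sum_le_of_forall_le _ _ fun d hd => ?_
  calc _ ≤ (∏ i ∈ d.support, f i ^ d i).natDegree := Polynomial.natDegree_C_mul_le _ _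
    _ ≤ ∑ i ∈ d.support, d i * w :=
        (Polynomial.natDegree_prod_le _ _).trans
          (Finset.sum_le_sum fun i _ => Polynomial.natDegree_pow_le_of_le _ (hf i))
    _ = d.degree * w := by rw [Finsupp.degree_apply, Finset.sum_mul]
    _ ≤ q.totalDegree * w := Nat.mul_le_mul_right _ (le_totalDegree hd)

end

section

variable {R : Type} [CommRing R] {r : ℕ}

theorem aeval_linForm {S : Type*} [CommRing S] [Algebra R S] (f : Fin r → S) (v : Fin r → R) :
    aeval f (linForm v) = ∑ i, algebraMap R S (v i) * f i := by
  simp [linForm]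

theorem aeval_single_linForm (e : Fin r) (v : Fin r → R) :
    aeval (Pi.single e (Polynomial.X : R[X])) (linForm v) = Polynomial.monomial 1 (v e) := by
  simp [aeval_linForm, Pi.single_apply, Polynomial.C_mul_X_eq_monomial]

theorem map_reesAlg_le_reesAlgebra (e : Fin r) {I : Ideal R}
    {M : Submodule R (Fin r → R)} (hM : M ≤ Submodule.comap (LinearMap.proj e) I) :
    (ReesAlg M).map (aeval (Pi.single e Polynomial.X)) ≤ reesAlgebra I := by
  rw [ReesAlg, AlgHom.map_adjoin, Algebra.adjoin_le_iff]
  rintro _ ⟨_, ⟨v, hv, rfl⟩, rfl⟩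
  rw [aeval_single_linForm]
  exact reesAlgebra.monomial_mem.2 (by simpa using hM hv)

theorem coeff_aeval_single_mem_pow_sub (e : Fin r)
    {I : Ideal R} {M : Submodule R (Fin r → R)} (hM : M ≤ Submodule.comap (LinearMap.proj e) I)
    {k : ℕ} {z : MvPolynomial (Fin r) R}
    (hz : z ∈ (ReesAlg M).toSubmodule * homogeneousSubmodule (Fin r) R k) (n : ℕ) :
    (aeval (Pi.single e Polynomial.X) z).coeff n ∈ I ^ (n - k) := by
  induction hz using Submodule.mul_induction_on' with
  | mem_mul_mem s hs q hq =>
    have hX : ∀ i, (Pi.single (M := fun _ => R[X]) e Polynomial.X i).natDegree ≤ 1 := fun i => by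
      rw [Pi.single_apply]
      split_ifs
      exacts [Polynomial.natDegree_X_le, by simp]
    have hdeg : (aeval (Pi.single e Polynomial.X) q).natDegree ≤ k :=
      calc _ ≤ q.totalDegree * 1 := natDegree_aeval_le _ hX q
        _ ≤ k := by simpa using ((mem_homogeneousSubmodule k q).1 hq).totalDegree_le
    rw [map_mul]
    exact Polynomial.coeff_mul_mem_pow_sub_of_mem_reesAlgebra
      (map_reesAlg_le_reesAlgebra e hM ⟨s, hs, rfl⟩) hdeg n
  | add y z _ _ hy hz =>
    rw [map_add, Polynomial.coeff_add]
    exact add_mem hy hz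

end

theorem annihilator_le_pow_maximalIdeal_general {R : Type} [CommRing R]
    [IsLocalRing R] {r d : ℕ} (hr : 0 < r)
    (L : Fin d → (Fin r → R)) (hL : ∀ j, L j ⟨0, hr⟩ ∈ maximalIdeal R)
    (M : Submodule R (Fin r → R)) (hM : M = Submodule.span R (Set.range L))
    (n k : ℕ) (x : R)
    (hx : ∀ p ∈ homogeneousSubmodule (Fin r) R n,
      C x * p ∈ SnM M (n - k) * homogeneousSubmodule (Fin r) R k) :
    x ∈ maximalIdeal R ^ (n - k) := by
  set e : Fin r := ⟨0, hr⟩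
  have hM_le : M ≤ Submodule.comap (LinearMap.proj e) (maximalIdeal R) := by
    rw [hM, Submodule.span_le]
    rintro _ ⟨j, rfl⟩
    exact hL j
  have hxT : C x * X e ^ n ∈ (ReesAlg M).toSubmodule * homogeneousSubmodule (Fin r) R k :=
    mul_le_mul_left (inf_le_left : SnM M (n - k) ≤ _) _ (hx _ (isHomogeneous_X_pow e n))
  simpa [Polynomial.coeff_C_mul] using coeff_aeval_single_mem_pow_sub e hM_le hxT n

/-- Let `(R, 𝔪)` be Noetherian local, `F = Rʳ` with standard basis `T₁,…,T_r`, and `M`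
generated by `L₁,…,L_d` each of whose `T₁`-coefficient lies in `𝔪`. Then for `n ≥ k` the
annihilator of `Sₙ(F)/(S_{n-k}(M)·S_k(F))` is contained in `𝔪^{n-k}`. -/
theorem annihilator_le_pow_maximalIdeal {R : Type} [CommRing R] [IsNoetherianRing R]
    [IsLocalRing R] {r d : ℕ} (hr : 0 < r)
    (L : Fin d → (Fin r → R)) (hL : ∀ j, L j ⟨0, hr⟩ ∈ maximalIdeal R)
    (M : Submodule R (Fin r → R)) (hM : M = Submodule.span R (Set.range L))
    (n k : ℕ) (hk : k ≤ n) (x : R)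
    (hx : ∀ p ∈ homogeneousSubmodule (Fin r) R n,
      C x * p ∈ SnM M (n - k) * homogeneousSubmodule (Fin r) R k) :
    x ∈ maximalIdeal R ^ (n - k) :=
  annihilator_le_pow_maximalIdeal_general hr L hL M hM n k x hx
end
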